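/- In type \(C_n\), the positive roots decompose as the disjoint union \(\Delta^+ = \bigsqcup_{i=1}^{n} H_{\beta_i}\), where \(H_{\beta_i} = \{\alpha \in \Delta^+ \mid (\alpha,\beta_i) > 0,\ (\alpha,\beta_k)=0 \text{ for } k < i\}\) and \(\beta_i = 2\alpha_i + \cdots + 2\alpha_{n-1} + \alpha_n\). -/

import Mathlib

/-- The standard basis vector `eᵢ` of `ℝ^∞` (1-based indexing). -/
noncomputable def e (i : ℕ) : ℕ → ℝ := fun m => if m = i then 1 else 0

/-- The standard inner product (on vectors supported in `{0,…,n}`). -/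
noncomputable def dotN (n : ℕ) (x y : ℕ → ℝ) : ℝ := ∑ m ∈ Finset.range (n + 1), x m * y m

/-- The positive roots of type `Cₙ`: `eᵢ - eⱼ`, `eᵢ + eⱼ` (`i < j`) and `2eᵢ`. -/
def DeltaCpos (n : ℕ) : Set (ℕ → ℝ) :=
  {v | ∃ i j, 1 ≤ i ∧ i ≤ j ∧ j ≤ n ∧ ((i < j ∧ v = e i - e j) ∨ v = e i + e j)}

/-- `H_{βᵢ} = {α ∈ Δ⁺ ∣ (α,βᵢ) > 0, (α,βₖ) = 0 for k < i}` where `βᵢ = 2eᵢ`. -/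
noncomputable def Hbeta (n i : ℕ) : Set (ℕ → ℝ) :=
  {v | v ∈ DeltaCpos n ∧ 0 < dotN n v ((2 : ℝ) • e i) ∧
    ∀ k, 1 ≤ k → k < i → dotN n v ((2 : ℝ) • e k) = 0}

/-! Pairing with `βₖ = 2eₖ` reads off twice the `k`-th coordinate, so `H_{βᵢ}` consists of the
positive roots whose first nonzero coordinate sits at `i` and is positive. Every positive root
`eᵢ ± eⱼ` (`i ≤ j`) has exactly this shape with leading index `i`. -/

lemma dotN_smul_e {n k : ℕ} (hk : k ≤ n) (v : ℕ → ℝ) (c : ℝ) :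
    dotN n v (c • e k) = v k * c := by
  unfold dotN
  rw [Finset.sum_eq_single k]
  · simp [e]
  · intro m _ hm
    simp [e, hm]
  · intro hk'
    exact absurd (Finset.mem_range.mpr (by omega)) hk'

lemma leading_coord_of_root {i j : ℕ} (hij : i ≤ j) {v : ℕ → ℝ}
    (hv : (i < j ∧ v = e i - e j) ∨ v = e i + e j) :
    0 < v i ∧ ∀ k < i, v k = 0 := by
  refine ⟨?_, fun k hk => ?_⟩
  · rcases hv with ⟨hlt, rfl⟩ | rfl
    · simp [e, hlt.ne]
    · simp only [Pi.add_apply, e]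
      split_ifs <;> norm_num
  · have hki : k ≠ i := by omega
    have hkj : k ≠ j := by omega
    rcases hv with ⟨-, rfl⟩ | rfl <;> simp [e, hki, hkj]

lemma mem_Hbeta_of_root {n i j : ℕ} (hi : 1 ≤ i) (hij : i ≤ j) (hjn : j ≤ n) {v : ℕ → ℝ}
    (hv : (i < j ∧ v = e i - e j) ∨ v = e i + e j) : v ∈ Hbeta n i := by
  obtain ⟨hpos, hzero⟩ := leading_coord_of_root hij hv
  refine ⟨⟨i, j, hi, hij, hjn, hv⟩, ?_, fun k _ hki => ?_⟩
  · rw [dotN_smul_e (hij.trans hjn)]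
    positivity
  · rw [dotN_smul_e (by omega), hzero k hki, zero_mul]

lemma DeltaCpos_eq_iUnion_Hbeta (n : ℕ) : DeltaCpos n = ⋃ i ∈ Finset.Icc 1 n, Hbeta n i := by
  ext v
  simp only [Set.mem_iUnion, Finset.mem_Icc]
  constructor
  · rintro ⟨i, j, hi, hij, hjn, hv⟩
    exact ⟨i, ⟨hi, hij.trans hjn⟩, mem_Hbeta_of_root hi hij hjn hv⟩
  · rintro ⟨i, -, hv, -⟩
    exact hv

lemma Hbeta_disjoint_of_lt {n i j : ℕ} (hi : 1 ≤ i) (hij : i < j) :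
    Disjoint (Hbeta n i) (Hbeta n j) := by
  rw [Set.disjoint_left]
  rintro v ⟨-, hpos, -⟩ ⟨-, -, hzero⟩
  exact hpos.ne' (hzero i hi hij)

theorem deltaCpos_decomposition_general (n : ℕ) :
    (DeltaCpos n = ⋃ i ∈ Finset.Icc 1 n, Hbeta n i) ∧
    (∀ i j, 1 ≤ i → i ≤ n → 1 ≤ j → j ≤ n → i ≠ j →
      Disjoint (Hbeta n i) (Hbeta n j)) := by
  refine ⟨DeltaCpos_eq_iUnion_Hbeta n, fun i j hi _ hj _ hij => ?_⟩
  rcases hij.lt_or_gt with h | h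
  · exact Hbeta_disjoint_of_lt hi h
  · exact (Hbeta_disjoint_of_lt hj h).symm

/-- In type `Cₙ`, the positive roots decompose as the disjoint union
`Δ⁺ = ⨆ᵢ H_{βᵢ}`, `1 ≤ i ≤ n`. -/
theorem deltaCpos_decomposition (n : ℕ) (hn : 2 ≤ n) :
    (DeltaCpos n = ⋃ i ∈ Finset.Icc 1 n, Hbeta n i) ∧
    (∀ i j, 1 ≤ i → i ≤ n → 1 ≤ j → j ≤ n → i ≠ j →
      Disjoint (Hbeta n i) (Hbeta n j)) :=
  deltaCpos_decomposition_general n
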